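/- The matrix of all in-forests satisfies Q = Σ_{k=0}^{n−d} s_{n−d−k}(−L)^k = adj(I + L), where s_i = Σ_{j=0}^i σ_j. -/

import Mathlib

open Matrix Finset Polynomial

/-- `A` is (the arc set of) an in-forest of the weighted digraph with arc-weight
matrix `W`: all arcs are loopless arcs of positive weight, every vertex has
outdegree at most one, and there are no directed cycles. -/
def IsInForest {n : ℕ} (W : Matrix (Fin n) (Fin n) ℝ)
    (A : Finset (Fin n × Fin n)) : Prop :=
  (∀ e ∈ A, e.1 ≠ e.2 ∧ 0 < W e.1 e.2) ∧
  (∀ i : Fin n, (A.filter (fun e => e.1 = i)).card ≤ 1) ∧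
  (∀ i : Fin n, ¬ Relation.TransGen (fun a b => (a, b) ∈ A) i i)

/-- The weight of a forest: the product of its arc weights. -/
def forestWeight {n : ℕ} (W : Matrix (Fin n) (Fin n) ℝ)
    (A : Finset (Fin n × Fin n)) : ℝ :=
  ∏ e ∈ A, W e.1 e.2

/-- `i` belongs to the tree of the forest `A` converging to (rooted at) `j`. -/
def InTreeRootedAt {n : ℕ} (A : Finset (Fin n × Fin n)) (i j : Fin n) : Prop :=
  Relation.ReflTransGen (fun a b => (a, b) ∈ A) i j ∧ ∀ e ∈ A, e.1 ≠ j

open scoped Classical in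
/-- `σ_k`: the total weight of in-forests with `k` arcs. -/
noncomputable def sigmaW {n : ℕ} (W : Matrix (Fin n) (Fin n) ℝ) (k : ℕ) : ℝ :=
  ∑ A ∈ Finset.univ.powerset.filter
      (fun A => IsInForest W A ∧ A.card = k), forestWeight W A

open scoped Classical in
/-- `Q_k`: the matrix of in-forests with `k` arcs; its `(i,j)` entry is the total
weight of in-forests with `k` arcs in which `i` belongs to a tree rooted at `j`. -/
noncomputable def forestMatrix {n : ℕ} (W : Matrix (Fin n) (Fin n) ℝ) (k : ℕ) :
    Matrix (Fin n) (Fin n) ℝ :=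
  Matrix.of fun i j =>
    ∑ A ∈ Finset.univ.powerset.filter
        (fun A => IsInForest W A ∧ A.card = k ∧ InTreeRootedAt A i j),
      forestWeight W A

open scoped Classical in
/-- `σ`: the total weight of all in-forests. -/
noncomputable def sigmaTot {n : ℕ} (W : Matrix (Fin n) (Fin n) ℝ) : ℝ :=
  ∑ A ∈ Finset.univ.powerset.filter (fun A => IsInForest W A), forestWeight W A

open scoped Classical in
/-- `Q`: the matrix of all in-forests. -/
noncomputable def forestMatrixTot {n : ℕ} (W : Matrix (Fin n) (Fin n) ℝ) :
    Matrix (Fin n) (Fin n) ℝ :=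
  Matrix.of fun i j =>
    ∑ A ∈ Finset.univ.powerset.filter
        (fun A => IsInForest W A ∧ InTreeRootedAt A i j), forestWeight W A

open scoped Classical in
/-- The number of arcs in a maximum in-forest (equal to `n - d` where `d` is the
in-forest dimension). -/
noncomputable def maxForestCard {n : ℕ} (W : Matrix (Fin n) (Fin n) ℝ) : ℕ :=
  (Finset.univ.powerset.filter (fun A => IsInForest W A)).sup Finset.card

/-- The in-forest dimension `d` of the digraph. -/
noncomputable def forestDim {n : ℕ} (W : Matrix (Fin n) (Fin n) ℝ) : ℕ :=
  n - maxForestCard W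

/-- The (row) Laplacian matrix of the weighted digraph with arc-weight matrix `W`. -/
def lap {n : ℕ} (W : Matrix (Fin n) (Fin n) ℝ) : Matrix (Fin n) (Fin n) ℝ :=
  Matrix.diagonal (fun i => ∑ j, W i j) - W

/-- `J̃`: the normalized matrix of maximum in-forests. -/
noncomputable def Jtilde {n : ℕ} (W : Matrix (Fin n) (Fin n) ℝ) :
    Matrix (Fin n) (Fin n) ℝ :=
  (sigmaW W (maxForestCard W))⁻¹ • forestMatrix W (maxForestCard W)

/-!
Write `Q_k` for the matrix of in-forests with `k` arcs. Expanding
`(L Q_k)_{ij} = Σ_t w_{it} (Q_k(i,j) - Q_k(t,j))` as a sum over pairs `(t, A)`, a pair contributes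
nothing when `t` reaches `i` in `A`. Otherwise, if `i` has an out-arc `(i, u)` in `A`, the pair
cancels against `(u, A - (i,u) + (i,t))`; if `i` is a root of `A`, the pair corresponds to the
`(k+1)`-forest `A + (i,t)`. This gives the recursion `Q_{k+1} = σ_{k+1} I - L Q_k` with
`Q_0 = I`, and summing it over `k` yields both the polynomial expression for `Q` and
`(I + L) Q = σ I`.

Hence `adj (I + L) = Q` as soon as `det (I + L) = σ`, which we prove by adding the arcs one at a
time. An arc `(a, b)` of weight `c` adds `c (adj(I + L)_{aa} - adj(I + L)_{ba})` to the
determinant and `c (Q_{aa} - Q_{ba})` to `σ` (the forests that `(a, b)` extends are those in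
which `a` is a root not reached from `b`), and these agree because `adj (I + L) = Q` for the
smaller digraph.
-/

notation:50 x:51 " ⟶[" A "]* " y:51 => Relation.ReflTransGen (fun a b => (a, b) ∈ A) x y

section Reachability

variable {α : Type*} {A : Finset (α × α)} {i j t x y : α}

theorem eq_of_reflTransGen_of_forall_ne (hx : ∀ e ∈ A, e.1 ≠ x) (h : x ⟶[A]* y) : x = y :=
  h.cases_head.resolve_right fun ⟨_, hc, _⟩ => hx _ hc rfl

theorem reflTransGen_root_of_reflTransGen (hA : Relator.RightUnique fun a b => (a, b) ∈ A)
    (hj : ∀ e ∈ A, e.1 ≠ j) (hxy : x ⟶[A]* y) (hxj : x ⟶[A]* j) : y ⟶[A]* j :=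
  (hxy.total_of_right_unique hA hxj).elim id fun h => eq_of_reflTransGen_of_forall_ne hj h ▸ .refl

variable [DecidableEq α]

theorem reflTransGen_insert_arc (h : x ⟶[insert (i, t) A]* y) :
    (x ⟶[A]* y) ∨ (x ⟶[A]* i) ∧ (t ⟶[insert (i, t) A]* y) := by
  induction h using Relation.ReflTransGen.head_induction_on with
  | refl => exact .inl .refl
  | head hac hcy ih =>
    rcases Finset.mem_insert.mp hac with hac | hac
    · obtain ⟨rfl, rfl⟩ := Prod.ext_iff.mp hac
      exact .inr ⟨.refl, hcy⟩
    · exact ih.imp (.head hac) (And.imp_left (.head hac))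

theorem reflTransGen_insert_arc_iff (h : ¬ x ⟶[A]* i) :
    (x ⟶[insert (i, t) A]* y) ↔ x ⟶[A]* y :=
  ⟨fun hxy => (reflTransGen_insert_arc hxy).resolve_right fun h' => h h'.1,
    Relation.ReflTransGen.mono (fun _ _ => Finset.mem_insert_of_mem) _ _⟩

theorem reflTransGen_to_source_insert_arc_iff :
    (x ⟶[insert (i, t) A]* i) ↔ x ⟶[A]* i :=
  ⟨fun h => (reflTransGen_insert_arc h).elim id And.left,
    Relation.ReflTransGen.mono (fun _ _ => Finset.mem_insert_of_mem) _ _⟩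

theorem not_transGen_insert_arc (hA : ∀ v, ¬ Relation.TransGen (fun a b => (a, b) ∈ A) v v)
    (hti : ¬ t ⟶[A]* i) (v : α) :
    ¬ Relation.TransGen (fun a b => (a, b) ∈ insert (i, t) A) v v := by
  have path (x y : α) (h : x ⟶[insert (i, t) A]* y) :
      (x ⟶[A]* y) ∨ (x ⟶[A]* i) ∧ t ⟶[A]* y :=
    (reflTransGen_insert_arc h).imp_right (And.imp_right (reflTransGen_insert_arc_iff hti).mp)
  intro hv
  obtain ⟨c, hvc, hcv⟩ := Relation.TransGen.head'_iff.mp hv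
  rcases Finset.mem_insert.mp hvc with hvc | hvc
  · obtain ⟨rfl, rfl⟩ := Prod.ext_iff.mp hvc
    exact hti ((path _ _ hcv).elim id And.left)
  · rcases path _ _ hcv with hcv | ⟨hci, htv⟩
    · exact hA v (.head' hvc hcv)
    · exact hti (htv.trans (.head hvc hci))

theorem rightUnique_insert_arc (hA : Relator.RightUnique fun a b => (a, b) ∈ A)
    (hi : ∀ e ∈ A, e.1 ≠ i) : Relator.RightUnique fun a b => (a, b) ∈ insert (i, t) A := by
  intro a b c hb hc
  simp only [Finset.mem_insert, Prod.mk.injEq] at hb hc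
  rcases hb with ⟨rfl, rfl⟩ | hb <;> rcases hc with ⟨ha, rfl⟩ | hc
  · rfl
  · exact absurd rfl (hi _ hc)
  · exact absurd ha (hi _ hb)
  · exact hA hb hc

end Reachability

section Forests

variable {n : ℕ} {W W' : Matrix (Fin n) (Fin n) ℝ} {A B : Finset (Fin n × Fin n)}
  {i j t x : Fin n}

theorem IsInForest.rightUnique (hA : IsInForest W A) :
    Relator.RightUnique fun a b => (a, b) ∈ A := fun a b c hb hc =>
  congrArg Prod.snd (Finset.card_le_one.mp (hA.2.1 a) (a, b) (by simp [hb]) (a, c) (by simp [hc]))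

theorem IsInForest.mono (hA : IsInForest W A) (hBA : B ⊆ A) : IsInForest W B :=
  ⟨fun e he => hA.1 e (hBA he),
    fun v => (Finset.card_le_card (Finset.filter_subset_filter _ hBA)).trans (hA.2.1 v),
    fun v h => hA.2.2 v (Relation.TransGen.mono (fun _ _ hab => hBA hab) _ _ h)⟩

theorem isInForest_empty : IsInForest W ∅ :=
  ⟨by simp, by simp, fun v h => by simpa using Relation.TransGen.head'_iff.mp h⟩

theorem IsInForest.insert (hA : IsInForest W A) (hi : ∀ e ∈ A, e.1 ≠ i) (hti : ¬ t ⟶[A]* i)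
    (hw : 0 < W i t) : IsInForest W (insert (i, t) A) := by
  refine ⟨?_, fun v => ?_, not_transGen_insert_arc hA.2.2 hti⟩
  · simp only [Finset.forall_mem_insert]
    exact ⟨⟨fun h => hti (h ▸ .refl), hw⟩, hA.1⟩
  · rw [Finset.filter_insert]
    split_ifs with hv
    · have : A.filter (fun e => e.1 = v) = ∅ :=
        Finset.filter_eq_empty_iff.mpr fun e he hev => hi e he (hev.trans hv.symm)
      simp [this]
    · exact hA.2.1 v

theorem isInForest_congr (h : ∀ e ∈ A, W e.1 e.2 = W' e.1 e.2) :
    IsInForest W A ↔ IsInForest W' A := by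
  unfold IsInForest
  rw [forall₂_congr fun e he => by rw [h e he]]

theorem forestWeight_congr (h : ∀ e ∈ A, W e.1 e.2 = W' e.1 e.2) :
    forestWeight W A = forestWeight W' A :=
  Finset.prod_congr rfl h

theorem IsInForest.forestWeight_pos (hA : IsInForest W A) : 0 < forestWeight W A :=
  Finset.prod_pos fun e he => (hA.1 e he).2

theorem forestWeight_insert (h : (i, t) ∉ A) :
    forestWeight W (insert (i, t) A) = W i t * forestWeight W A :=
  Finset.prod_insert h

theorem inTreeRootedAt_iff_of_reflTransGen (hA : Relator.RightUnique fun a b => (a, b) ∈ A)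
    (h : x ⟶[A]* t) : InTreeRootedAt A x j ↔ InTreeRootedAt A t j :=
  ⟨fun ⟨hxj, hj⟩ => ⟨reflTransGen_root_of_reflTransGen hA hj h hxj, hj⟩,
    fun ⟨htj, hj⟩ => ⟨h.trans htj, hj⟩⟩

theorem inTreeRootedAt_iff_eq_of_root (hi : ∀ e ∈ A, e.1 ≠ i) :
    InTreeRootedAt A i j ↔ i = j :=
  ⟨fun h => eq_of_reflTransGen_of_forall_ne hi h.1, by rintro rfl; exact ⟨.refl, hi⟩⟩

theorem inTreeRootedAt_insert_iff (h : ¬ x ⟶[A]* i) (v : Fin n) :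
    InTreeRootedAt (insert (i, v) A) x j ↔ InTreeRootedAt A x j ∧ j ≠ i := by
  simp only [InTreeRootedAt, Finset.forall_mem_insert, reflTransGen_insert_arc_iff h, ne_comm]
  tauto

end Forests

section ForestSums

open scoped Classical

variable {n : ℕ} (W : Matrix (Fin n) (Fin n) ℝ)

noncomputable def forests : Finset (Finset (Fin n × Fin n)) :=
  Finset.univ.filter (IsInForest W)

noncomputable def treeMatrix (A : Finset (Fin n × Fin n)) : Matrix (Fin n) (Fin n) ℝ :=
  Matrix.of fun x j => if InTreeRootedAt A x j then 1 else 0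

variable {W}

@[simp]
theorem mem_forests {A : Finset (Fin n × Fin n)} : A ∈ forests W ↔ IsInForest W A := by
  simp [forests]

variable (W)

theorem sigmaW_eq_sum (k : ℕ) :
    sigmaW W k = ∑ A ∈ forests W with A.card = k, forestWeight W A := by
  simp only [sigmaW, forests, Finset.filter_filter, Finset.powerset_univ]

theorem sigmaTot_eq_sum : sigmaTot W = ∑ A ∈ forests W, forestWeight W A := by
  simp only [sigmaTot, forests, Finset.powerset_univ]

theorem forestMatrix_eq_sum (k : ℕ) :
    forestMatrix W k = ∑ A ∈ forests W with A.card = k, forestWeight W A • treeMatrix A := by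
  ext x j
  simp [forestMatrix, forests, treeMatrix, Matrix.sum_apply, Finset.sum_filter, ite_and]

theorem forestMatrixTot_eq_sum :
    forestMatrixTot W = ∑ A ∈ forests W, forestWeight W A • treeMatrix A := by
  ext x j
  simp [forestMatrixTot, forests, treeMatrix, Matrix.sum_apply, Finset.sum_filter, ite_and]

variable {W} {A : Finset (Fin n × Fin n)} {i j t x : Fin n} {k : ℕ}

theorem treeMatrix_apply_of_root (hi : ∀ e ∈ A, e.1 ≠ i) :
    treeMatrix A i j = (1 : Matrix (Fin n) (Fin n) ℝ) i j := by
  simp [treeMatrix, Matrix.one_apply, inTreeRootedAt_iff_eq_of_root hi]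

theorem treeMatrix_apply_eq_of_reflTransGen (hA : Relator.RightUnique fun a b => (a, b) ∈ A)
    (h : x ⟶[A]* t) : treeMatrix A x j = treeMatrix A t j := by
  simp [treeMatrix, inTreeRootedAt_iff_of_reflTransGen hA h]

theorem treeMatrix_insert_apply (h : ¬ x ⟶[A]* i) (v : Fin n) :
    treeMatrix (insert (i, v) A) x j = if j = i then 0 else treeMatrix A x j := by
  by_cases hj : j = i <;> simp [treeMatrix, inTreeRootedAt_insert_iff h, hj]

theorem treeMatrix_insert_apply_self (hA : Relator.RightUnique fun a b => (a, b) ∈ A)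
    (hi : ∀ e ∈ A, e.1 ≠ i) (ht : ¬ t ⟶[A]* i) :
    treeMatrix (insert (i, t) A) i j = if j = i then 0 else treeMatrix A t j :=
  (treeMatrix_apply_eq_of_reflTransGen (rightUnique_insert_arc hA hi)
    (.single (Finset.mem_insert_self _ _))).trans (treeMatrix_insert_apply ht t)

theorem treeMatrix_insert_apply_sub (hA : Relator.RightUnique fun a b => (a, b) ∈ A)
    (hi : ∀ e ∈ A, e.1 ≠ i) {u : Fin n} (hu : ¬ u ⟶[A]* i) (ht : ¬ t ⟶[A]* i) :
    treeMatrix (insert (i, u) A) i j - treeMatrix (insert (i, u) A) t j =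
      if j = i then 0 else treeMatrix A u j - treeMatrix A t j := by
  rw [treeMatrix_insert_apply_self hA hi hu, treeMatrix_insert_apply ht]
  split_ifs <;> ring

theorem treeMatrix_empty : treeMatrix (∅ : Finset (Fin n × Fin n)) = 1 := by
  ext x j
  exact treeMatrix_apply_of_root (by simp)

theorem card_le_maxForestCard (hA : IsInForest W A) : A.card ≤ maxForestCard W :=
  Finset.le_sup (by simpa using hA)

theorem forests_filter_card_eq_zero : {A ∈ forests W | A.card = 0} = {∅} := by
  ext A
  simp only [Finset.mem_filter, mem_forests, Finset.card_eq_zero, Finset.mem_singleton]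
  exact ⟨And.right, fun h => ⟨h ▸ isInForest_empty, h⟩⟩

theorem sigmaW_zero : sigmaW W 0 = 1 := by
  rw [sigmaW_eq_sum, forests_filter_card_eq_zero, Finset.sum_singleton, forestWeight,
    Finset.prod_empty]

theorem forestMatrix_zero : forestMatrix W 0 = 1 := by
  rw [forestMatrix_eq_sum, forests_filter_card_eq_zero, Finset.sum_singleton, forestWeight,
    Finset.prod_empty, one_smul, treeMatrix_empty]

theorem forests_filter_card_eq_empty (hk : maxForestCard W < k) :
    {A ∈ forests W | A.card = k} = ∅ :=
  Finset.filter_eq_empty_iff.mpr fun _ hA hcard =>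
    (card_le_maxForestCard (mem_forests.mp hA)).not_gt (hcard ▸ hk)

theorem sigmaW_eq_zero (hk : maxForestCard W < k) : sigmaW W k = 0 := by
  rw [sigmaW_eq_sum, forests_filter_card_eq_empty hk, Finset.sum_empty]

theorem forestMatrix_eq_zero (hk : maxForestCard W < k) : forestMatrix W k = 0 := by
  rw [forestMatrix_eq_sum, forests_filter_card_eq_empty hk, Finset.sum_empty]

theorem sum_forests_eq_sum_range_card {M : Type*} [AddCommMonoid M]
    (f : Finset (Fin n × Fin n) → M) :
    ∑ A ∈ forests W, f A = ∑ k ∈ Finset.range (maxForestCard W + 1),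
      ∑ A ∈ forests W with A.card = k, f A :=
  (Finset.sum_fiberwise_of_maps_to (fun _ hA => Finset.mem_range_succ_iff.mpr
    (card_le_maxForestCard (mem_forests.mp hA))) f).symm

variable (W)

theorem sigmaTot_eq_sum_sigmaW :
    sigmaTot W = ∑ k ∈ Finset.range (maxForestCard W + 1), sigmaW W k := by
  simp only [sigmaTot_eq_sum, sigmaW_eq_sum, sum_forests_eq_sum_range_card]

theorem forestMatrixTot_eq_sum_forestMatrix :
    forestMatrixTot W = ∑ k ∈ Finset.range (maxForestCard W + 1), forestMatrix W k := by
  simp only [forestMatrixTot_eq_sum, forestMatrix_eq_sum, sum_forests_eq_sum_range_card]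

theorem sigmaTot_pos : 0 < sigmaTot W := by
  rw [sigmaTot_eq_sum]
  exact Finset.sum_pos (fun A hA => (mem_forests.mp hA).forestWeight_pos)
    ⟨∅, mem_forests.mpr isInForest_empty⟩

end ForestSums

section ArcInsertion

open scoped Classical

variable {n : ℕ} {W : Matrix (Fin n) (Fin n) ℝ} {i t : Fin n}

theorem sum_forests_mem_arc {M : Type*} [AddCommMonoid M] (hw : 0 < W i t)
    (g : Finset (Fin n × Fin n) → M) :
    ∑ G ∈ forests W with (i, t) ∈ G, g G =
      ∑ A ∈ forests W with (∀ e ∈ A, e.1 ≠ i) ∧ ¬ t ⟶[A]* i,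
        g (insert (i, t) A) := by
  refine (Finset.sum_nbij' (insert (i, t)) (fun G => G.erase (i, t)) ?_ ?_ ?_ ?_
    fun _ _ => rfl).symm
  · intro A hA
    simp only [Finset.mem_filter, mem_forests] at hA ⊢
    exact ⟨hA.1.insert hA.2.1 hA.2.2 hw, Finset.mem_insert_self _ _⟩
  · intro G hG
    simp only [Finset.mem_filter, mem_forests] at hG ⊢
    obtain ⟨hG, hit⟩ := hG
    refine ⟨hG.mono (Finset.erase_subset _ _), fun e he hei => ?_, fun hti => ?_⟩
    · obtain ⟨hne, heG⟩ := Finset.mem_erase.mp he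
      have hiG : (i, e.2) ∈ G := by rw [← hei]; exact heG
      exact hne (Prod.ext hei (hG.rightUnique hiG hit))
    · exact hG.2.2 i (.head' hit
        (Relation.ReflTransGen.mono (fun _ _ => Finset.mem_of_mem_erase) _ _ hti))
  · intro A hA
    exact Finset.erase_insert fun h => (Finset.mem_filter.mp hA).2.1 _ h rfl
  · intro G hG
    exact Finset.insert_erase (Finset.mem_filter.mp hG).2

theorem sum_forests_not_root (hW : ∀ a b, 0 ≤ W a b) (h : Finset (Fin n × Fin n) → ℝ) :
    ∑ G ∈ forests W with ¬ ∀ e ∈ G, e.1 ≠ i, forestWeight W G * h G =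
      ∑ t, ∑ A ∈ forests W with (∀ e ∈ A, e.1 ≠ i) ∧ ¬ t ⟶[A]* i,
        W i t * forestWeight W A * h (insert (i, t) A) := by
  have by_out_arc : ∑ G ∈ forests W with ¬ ∀ e ∈ G, e.1 ≠ i, forestWeight W G * h G =
      ∑ t, ∑ G ∈ forests W with (i, t) ∈ G, forestWeight W G * h G := by
    simp only [Finset.sum_filter]
    rw [Finset.sum_comm]
    refine Finset.sum_congr rfl fun G hG => ?_
    by_cases hroot : ∀ e ∈ G, e.1 ≠ i
    · rw [if_neg (not_not_intro hroot)]
      exact (Finset.sum_eq_zero fun t _ => if_neg fun hit => hroot _ hit rfl).symm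
    · obtain ⟨⟨i', u⟩, hu, rfl⟩ : ∃ e ∈ G, e.1 = i := by simpa using hroot
      rw [if_pos hroot, Finset.sum_eq_single_of_mem u (Finset.mem_univ _)
        fun t _ htu => if_neg fun hit => htu ((mem_forests.mp hG).rightUnique hit hu),
        if_pos hu]
  rw [by_out_arc]
  refine Finset.sum_congr rfl fun t _ => ?_
  rcases (hW i t).lt_or_eq with hw | hw
  · rw [sum_forests_mem_arc hw]
    refine Finset.sum_congr rfl fun A hA => ?_
    rw [forestWeight_insert fun h => (Finset.mem_filter.mp hA).2.1 _ h rfl]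
  · rw [← hw]
    simp only [zero_mul, Finset.sum_const_zero]
    refine Finset.sum_eq_zero fun G hG => ?_
    simp only [Finset.mem_filter, mem_forests] at hG
    exact absurd (hG.1.1 _ hG.2).2 (hw ▸ lt_irrefl 0)

end ArcInsertion

theorem sum_sum_eq_zero_of_antisymm {ι G : Type*} [AddCommGroup G] [IsAddTorsionFree G]
    (s : Finset ι) {F : ι → ι → G} (h : ∀ t u, F t u = -F u t) :
    ∑ t ∈ s, ∑ u ∈ s, F t u = 0 := by
  refine self_eq_neg.mp ?_
  conv_lhs => rw [Finset.sum_comm]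
  simp only [← Finset.sum_neg_distrib]
  exact Finset.sum_congr rfl fun u _ => Finset.sum_congr rfl fun t _ => h t u

section Recursion

open scoped Classical

variable {n : ℕ} {W : Matrix (Fin n) (Fin n) ℝ}

theorem lap_mul_apply (M : Matrix (Fin n) (Fin n) ℝ) (i j : Fin n) :
    (lap W * M) i j = ∑ t, W i t * (M i j - M t j) := by
  rw [lap, Matrix.sub_mul, Matrix.sub_apply, Matrix.diagonal_mul, Matrix.mul_apply,
    Finset.sum_mul, ← Finset.sum_sub_distrib]
  simp only [mul_sub]

theorem forestMatrix_apply (k : ℕ) (x j : Fin n) :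
    forestMatrix W k x j =
      ∑ A ∈ forests W with A.card = k, forestWeight W A * treeMatrix A x j := by
  simp [forestMatrix_eq_sum, Matrix.sum_apply]

variable (hW : ∀ a b, 0 ≤ W a b) (i j : Fin n) (k : ℕ)
include hW

theorem sum_not_root_eq_sum_insert_arc (t : Fin n) :
    ∑ A ∈ forests W with A.card = k ∧ ¬ (∀ e ∈ A, e.1 ≠ i) ∧ ¬ t ⟶[A]* i,
      W i t * forestWeight W A * (treeMatrix A i j - treeMatrix A t j) =
    ∑ u, ∑ B ∈ forests W with ∀ e ∈ B, e.1 ≠ i,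
      if B.card + 1 = k ∧ ¬ u ⟶[B]* i ∧ ¬ t ⟶[B]* i then
        W i t * W i u * forestWeight W B *
          (if j = i then 0 else treeMatrix B u j - treeMatrix B t j)
      else 0 := by
  calc _ = ∑ G ∈ forests W with ¬ ∀ e ∈ G, e.1 ≠ i, forestWeight W G *
        if G.card = k ∧ ¬ t ⟶[G]* i then W i t * (treeMatrix G i j - treeMatrix G t j)
        else 0 := by
        simp only [Finset.sum_filter]
        refine Finset.sum_congr rfl fun G _ => ?_
        split_ifs <;> first | (exfalso; tauto) | ring
    _ = _ := sum_forests_not_root hW _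
    _ = _ := by
        refine Finset.sum_congr rfl fun u _ => ?_
        simp only [Finset.sum_filter]
        refine Finset.sum_congr rfl fun B hB => ?_
        by_cases hroot : ∀ e ∈ B, e.1 ≠ i
        swap
        · rw [if_neg fun h => hroot h.1, if_neg hroot]
        by_cases hu : u ⟶[B]* i
        · rw [if_neg fun h => h.2 hu, if_pos hroot, if_neg fun h => h.2.1 hu]
        rw [if_pos ⟨hroot, hu⟩, if_pos hroot,
          Finset.card_insert_of_notMem fun h => hroot _ h rfl,
          reflTransGen_to_source_insert_arc_iff]
        by_cases ht : t ⟶[B]* i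
        · rw [if_neg fun h => h.2 ht, if_neg fun h => h.2.2 ht, mul_zero]
        by_cases hk : B.card + 1 = k
        · rw [if_pos ⟨hk, ht⟩, if_pos ⟨hk, hu, ht⟩,
            treeMatrix_insert_apply_sub (mem_forests.mp hB).rightUnique hroot hu ht]
          ring
        · rw [if_neg fun h => hk h.1, if_neg fun h => hk h.1, mul_zero]

theorem sum_not_root_eq_zero :
    ∑ t, ∑ A ∈ forests W with A.card = k ∧ ¬ (∀ e ∈ A, e.1 ≠ i) ∧ ¬ t ⟶[A]* i,
      W i t * forestWeight W A * (treeMatrix A i j - treeMatrix A t j) = 0 := by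
  simp only [sum_not_root_eq_sum_insert_arc hW i j k]
  -- the summand for `(t, B + (i, u))` is minus the one for `(u, B + (i, t))`
  refine sum_sum_eq_zero_of_antisymm _ fun t u => ?_
  simp only [← Finset.sum_neg_distrib]
  refine Finset.sum_congr rfl fun B _ => ?_
  split_ifs <;> first | (exfalso; tauto) | ring

theorem lap_mul_forestMatrix_apply :
    (lap W * forestMatrix W k) i j =
      ∑ t, ∑ A ∈ forests W with A.card = k ∧ (∀ e ∈ A, e.1 ≠ i) ∧ ¬ t ⟶[A]* i,
        W i t * forestWeight W A * (treeMatrix A i j - treeMatrix A t j) := by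
  rw [lap_mul_apply, ← sub_eq_zero, ← sum_not_root_eq_zero hW i j k, ← Finset.sum_sub_distrib]
  refine Finset.sum_congr rfl fun t _ => ?_
  simp only [forestMatrix_apply, Finset.sum_filter, ← Finset.sum_sub_distrib, Finset.mul_sum]
  refine Finset.sum_congr rfl fun A hA => ?_
  by_cases ht : t ⟶[A]* i
  · simp [treeMatrix_apply_eq_of_reflTransGen (mem_forests.mp hA).rightUnique ht]
  · split_ifs <;> first | (exfalso; tauto) | ring

theorem sigmaW_succ_mul_sub_forestMatrix_succ_apply :
    sigmaW W (k + 1) * (1 : Matrix (Fin n) (Fin n) ℝ) i j - forestMatrix W (k + 1) i j =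
      ∑ t, ∑ A ∈ forests W with A.card = k ∧ (∀ e ∈ A, e.1 ≠ i) ∧ ¬ t ⟶[A]* i,
        W i t * forestWeight W A * (treeMatrix A i j - treeMatrix A t j) := by
  rw [sigmaW_eq_sum, Finset.sum_mul, forestMatrix_apply, ← Finset.sum_sub_distrib]
  calc _ = ∑ G ∈ forests W with ¬ ∀ e ∈ G, e.1 ≠ i, forestWeight W G *
        if G.card = k + 1 then (1 : Matrix (Fin n) (Fin n) ℝ) i j - treeMatrix G i j else 0 := by
        simp only [Finset.sum_filter]
        refine Finset.sum_congr rfl fun G _ => ?_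
        by_cases hroot : ∀ e ∈ G, e.1 ≠ i
        · simp [treeMatrix_apply_of_root hroot]
        · simp only [hroot, not_false_eq_true, if_true]
          split_ifs <;> ring
    _ = _ := sum_forests_not_root hW _
    _ = _ := by
        refine Finset.sum_congr rfl fun t _ => ?_
        simp only [Finset.sum_filter]
        refine Finset.sum_congr rfl fun A hA => ?_
        by_cases hroot : ∀ e ∈ A, e.1 ≠ i
        swap
        · rw [if_neg fun h => hroot h.1, if_neg fun h => hroot h.2.1]
        by_cases ht : t ⟶[A]* i
        · rw [if_neg fun h => h.2 ht, if_neg fun h => h.2.2 ht]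
        rw [if_pos ⟨hroot, ht⟩, Finset.card_insert_of_notMem fun h => hroot _ h rfl]
        by_cases hk : A.card = k
        swap
        · rw [if_neg (show ¬ A.card + 1 = k + 1 by omega), if_neg fun h => hk h.1, mul_zero]
        rw [if_pos (show A.card + 1 = k + 1 by rw [hk]), if_pos ⟨hk, hroot, ht⟩,
          treeMatrix_insert_apply_self (mem_forests.mp hA).rightUnique hroot ht,
          treeMatrix_apply_of_root hroot]
        by_cases hji : j = i
        · subst hji
          simp [treeMatrix, InTreeRootedAt, ht]
        · simp [hji]

theorem forestMatrix_succ :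
    forestMatrix W (k + 1) = sigmaW W (k + 1) • 1 + -lap W * forestMatrix W k := by
  ext i j
  rw [Matrix.add_apply, Matrix.smul_apply, smul_eq_mul, neg_mul, Matrix.neg_apply,
    lap_mul_forestMatrix_apply hW, ← sigmaW_succ_mul_sub_forestMatrix_succ_apply hW]
  ring

end Recursion

section Recurrence

variable {K R : Type*} [CommRing K] [Ring R] [Algebra K R] {X : R} {σ : ℕ → K} {q : ℕ → R}

theorem sum_range_eq_sum_smul_pow_of_recurrence (h0 : q 0 = σ 0 • 1)
    (hq : ∀ k, q (k + 1) = σ (k + 1) • 1 + X * q k) (N : ℕ) :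
    ∑ k ∈ Finset.range (N + 1), q k =
      ∑ l ∈ Finset.range (N + 1), (∑ j ∈ Finset.range (N - l + 1), σ j) • X ^ l := by
  induction N with
  | zero => simp [h0]
  | succ N ih =>
    rw [Finset.sum_range_succ', Finset.sum_range_succ' _ (N + 1)]
    simp only [hq]
    rw [Finset.sum_add_distrib, ← Finset.mul_sum, ih, ← Finset.sum_smul, Finset.mul_sum, h0,
      Nat.sub_zero, pow_zero, Finset.sum_range_succ' _ (N + 1), add_smul]
    simp only [mul_smul_comm, ← pow_succ', Nat.add_sub_add_right]
    abel

theorem one_sub_mul_sum_range_of_recurrence (h0 : q 0 = σ 0 • 1)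
    (hq : ∀ k, q (k + 1) = σ (k + 1) • 1 + X * q k) (N : ℕ) :
    (1 - X) * ∑ k ∈ Finset.range (N + 1), q k =
      (∑ k ∈ Finset.range (N + 2), σ k) • 1 - q (N + 1) := by
  induction N with
  | zero =>
    rw [Finset.sum_range_one, hq 0, h0, Finset.sum_range_succ, Finset.sum_range_one, add_smul,
      sub_mul, one_mul]
    abel
  | succ N ih =>
    rw [Finset.sum_range_succ _ (N + 1), mul_add, ih, hq (N + 1), Finset.sum_range_succ _ (N + 2),
      add_smul, sub_mul, one_mul]
    abel

end Recurrence

section Assembly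

variable {n : ℕ} {W : Matrix (Fin n) (Fin n) ℝ}

theorem forestMatrixTot_eq_sum_smul_pow (hW : ∀ a b, 0 ≤ W a b) :
    forestMatrixTot W = ∑ k ∈ Finset.range (maxForestCard W + 1),
      (∑ j ∈ Finset.range (maxForestCard W - k + 1), sigmaW W j) • (-lap W) ^ k := by
  rw [forestMatrixTot_eq_sum_forestMatrix]
  exact sum_range_eq_sum_smul_pow_of_recurrence (by rw [forestMatrix_zero, sigmaW_zero, one_smul])
    (forestMatrix_succ hW) _

theorem one_add_lap_mul_forestMatrixTot (hW : ∀ a b, 0 ≤ W a b) :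
    (1 + lap W) * forestMatrixTot W = sigmaTot W • 1 := by
  have h := one_sub_mul_sum_range_of_recurrence (by rw [forestMatrix_zero, sigmaW_zero, one_smul])
    (forestMatrix_succ hW) (maxForestCard W)
  rwa [sub_neg_eq_add, ← forestMatrixTot_eq_sum_forestMatrix,
    forestMatrix_eq_zero (Nat.lt_succ_self _), sub_zero, Finset.sum_range_succ,
    sigmaW_eq_zero (Nat.lt_succ_self _), add_zero, ← sigmaTot_eq_sum_sigmaW] at h

end Assembly

section Determinant

theorem det_add_single_sub_single {ι R : Type*} [Fintype ι] [DecidableEq ι] [CommRing R]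
    (M : Matrix ι ι R) (a b : ι) (c : R) :
    (M + Matrix.single a a c - Matrix.single a b c).det =
      M.det + c * (M.adjugate a a - M.adjugate b a) := by
  have hrow : M + Matrix.single a a c - Matrix.single a b c =
      M.updateRow a (M a + c • Pi.single a 1 + (-c) • Pi.single b 1) := by
    ext x y
    by_cases hx : x = a
    · subst hx
      simp [Matrix.single_apply, Pi.single_apply, sub_eq_add_neg, eq_comm]
    · simp [Ne.symm hx, Matrix.updateRow_ne hx]
  rw [hrow, Matrix.det_updateRow_add, Matrix.det_updateRow_add, Matrix.updateRow_eq_self,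
    Matrix.det_updateRow_smul, Matrix.det_updateRow_smul, ← Matrix.adjugate_apply,
    ← Matrix.adjugate_apply]
  ring

theorem adjugate_eq_of_mul_eq_det_smul {ι K : Type*} [Fintype ι] [DecidableEq ι] [Field K]
    {M N : Matrix ι ι K} (h : M * N = M.det • 1) (hM : M.det ≠ 0) : M.adjugate = N := by
  have := congrArg (M.adjugate * ·) h
  simp only [← Matrix.mul_assoc, Matrix.adjugate_mul, Matrix.smul_mul, one_mul, Matrix.mul_smul,
    mul_one] at this
  exact (smul_right_injective _ hM this).symm

variable {n : ℕ} {W : Matrix (Fin n) (Fin n) ℝ} {a b : Fin n} {c : ℝ}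

theorem lap_add_single :
    lap (W + Matrix.single a b c) = lap W + Matrix.single a a c - Matrix.single a b c := by
  ext x y
  simp only [lap, Matrix.add_apply, Matrix.sub_apply, Matrix.diagonal_apply, Matrix.single_apply,
    Finset.sum_add_distrib]
  by_cases hxy : x = y
  · subst hxy
    by_cases hx : a = x <;> simp [hx]
    ring
  · by_cases hx : a = x <;> simp [hx, hxy]
    ring

theorem sigmaTot_zero : sigmaTot (0 : Matrix (Fin n) (Fin n) ℝ) = 1 := by
  have : forests (0 : Matrix (Fin n) (Fin n) ℝ) = {∅} := by
    ext A
    simp only [mem_forests, Finset.mem_singleton]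
    refine ⟨fun hA => Finset.eq_empty_of_forall_notMem fun e he => ?_,
      fun h => h ▸ isInForest_empty⟩
    exact lt_irrefl _ (hA.1 e he).2
  simp [sigmaTot_eq_sum, this, forestWeight]

theorem add_single_apply_eq_of_notMem {A : Finset (Fin n × Fin n)} (h : (a, b) ∉ A) :
    ∀ e ∈ A, (W + Matrix.single a b c) e.1 e.2 = W e.1 e.2 := by
  intro e he
  have : ¬ (a = e.1 ∧ b = e.2) := fun hab => h (by rw [hab.1, hab.2]; exact he)
  simp [this]

open scoped Classical in
theorem forestMatrixTot_apply_self_sub_apply :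
    forestMatrixTot W a a - forestMatrixTot W b a =
      ∑ A ∈ forests W with (∀ e ∈ A, e.1 ≠ a) ∧ ¬ b ⟶[A]* a, forestWeight W A := by
  simp only [forestMatrixTot_eq_sum, Matrix.sum_apply, Matrix.smul_apply, smul_eq_mul,
    ← Finset.sum_sub_distrib, ← mul_sub, Finset.sum_filter]
  refine Finset.sum_congr rfl fun A _ => ?_
  by_cases hroot : ∀ e ∈ A, e.1 ≠ a
  · rw [treeMatrix_apply_of_root hroot, Matrix.one_apply_eq]
    by_cases hba : b ⟶[A]* a
    · rw [show treeMatrix A b a = 1 from if_pos ⟨hba, hroot⟩, if_neg fun h => h.2 hba,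
        sub_self, mul_zero]
    · rw [show treeMatrix A b a = 0 from if_neg fun h => hba h.1, if_pos ⟨hroot, hba⟩,
        sub_zero, mul_one]
  · rw [show treeMatrix A a a = 0 from if_neg fun h => hroot h.2,
      show treeMatrix A b a = 0 from if_neg fun h => hroot h.2, if_neg fun h => hroot h.1,
      sub_self, mul_zero]

open scoped Classical in
theorem sigmaTot_add_single (hab : W a b = 0) (hc : 0 < c) :
    sigmaTot (W + Matrix.single a b c) =
      sigmaTot W + c * (forestMatrixTot W a a - forestMatrixTot W b a) := by
  set W' := W + Matrix.single a b c
  have no_arc {A : Finset (Fin n × Fin n)} (hA : IsInForest W A) : (a, b) ∉ A :=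
    fun h => (hA.1 _ h).2.ne' hab
  have no_arc_of_root {A : Finset (Fin n × Fin n)} (h : ∀ e ∈ A, e.1 ≠ a) : (a, b) ∉ A :=
    fun hA => h _ hA rfl
  have without_arc : ∑ A ∈ forests W' with (a, b) ∉ A, forestWeight W' A =
      ∑ A ∈ forests W, forestWeight W A := by
    refine Finset.sum_congr ?_ fun A hA =>
      forestWeight_congr (add_single_apply_eq_of_notMem (no_arc (mem_forests.mp hA)))
    ext A
    simp only [Finset.mem_filter, mem_forests]
    exact ⟨fun h => (isInForest_congr (add_single_apply_eq_of_notMem h.2)).mp h.1, fun h =>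
      ⟨(isInForest_congr (add_single_apply_eq_of_notMem (no_arc h))).mpr h, no_arc h⟩⟩
  have with_arc : ∑ A ∈ forests W' with (a, b) ∈ A, forestWeight W' A =
      c * ∑ A ∈ forests W with (∀ e ∈ A, e.1 ≠ a) ∧ ¬ b ⟶[A]* a,
        forestWeight W A := by
    have hW'ab : W' a b = c := by simp [W', hab]
    rw [sum_forests_mem_arc (hW'ab ▸ hc), Finset.mul_sum]
    refine Finset.sum_congr ?_ fun A hA => ?_
    · ext A
      simp only [Finset.mem_filter, mem_forests]
      exact and_congr_left fun h => isInForest_congr (add_single_apply_eq_of_notMem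
        (no_arc_of_root h.1))
    · have hA := no_arc_of_root (Finset.mem_filter.mp hA).2.1
      rw [forestWeight_insert hA, hW'ab, forestWeight_congr (add_single_apply_eq_of_notMem hA)]
  rw [sigmaTot_eq_sum, sigmaTot_eq_sum,
    ← Finset.sum_filter_add_sum_filter_not _ (fun A => (a, b) ∈ A), with_arc, without_arc,
    forestMatrixTot_apply_self_sub_apply]
  ring

theorem adjugate_one_add_lap_of_det (hW : ∀ x y, 0 ≤ W x y)
    (h : (1 + lap W).det = sigmaTot W) : (1 + lap W).adjugate = forestMatrixTot W :=
  adjugate_eq_of_mul_eq_det_smul (h ▸ one_add_lap_mul_forestMatrixTot hW)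
    (h ▸ (sigmaTot_pos W).ne')

theorem det_one_add_lap_add_single (hW : ∀ x y, 0 ≤ W x y) (hab : W a b = 0) (hc : 0 < c)
    (h : (1 + lap W).det = sigmaTot W) :
    (1 + lap (W + Matrix.single a b c)).det = sigmaTot (W + Matrix.single a b c) := by
  have hlap : 1 + lap (W + Matrix.single a b c) =
      1 + lap W + Matrix.single a a c - Matrix.single a b c := by
    rw [lap_add_single]
    abel
  rw [hlap, det_add_single_sub_single, adjugate_one_add_lap_of_det hW h, h,
    sigmaTot_add_single hab hc]

theorem det_one_add_lap (hW : ∀ x y, 0 ≤ W x y) : (1 + lap W).det = sigmaTot W := by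
  let restrict (S : Finset (Fin n × Fin n)) : Matrix (Fin n) (Fin n) ℝ :=
    Matrix.of fun x y => if (x, y) ∈ S then W x y else 0
  suffices key : ∀ S, (1 + lap (restrict S)).det = sigmaTot (restrict S) by
    have : restrict Finset.univ = W := by ext; simp [restrict]
    rw [← this, key]
  intro S
  induction S using Finset.induction_on with
  | empty =>
    have : restrict ∅ = 0 := by ext; simp [restrict]
    simp [this, lap, sigmaTot_zero]
  | insert p S hp ih =>
    have hsplit : restrict (insert p S) = restrict S + Matrix.single p.1 p.2 (W p.1 p.2) := by
      ext x y
      by_cases hxy : (x, y) = p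
      · subst hxy
        simp [restrict, hp]
      · have : ¬ (p.1 = x ∧ p.2 = y) := fun h => hxy (by rw [← h.1, ← h.2])
        simp [restrict, hxy, this]
    rw [hsplit]
    rcases (hW p.1 p.2).lt_or_eq with hpos | hzero
    · refine det_one_add_lap_add_single (fun x y => ?_) (by simp [restrict, hp]) hpos ih
      by_cases hxy : (x, y) ∈ S <;> simp [restrict, hxy, hW x y]
    · rwa [← hzero, Matrix.single_zero, add_zero]

end Determinant

theorem forestMatrixTot_eq_poly_lap_general {n : ℕ} (W : Matrix (Fin n) (Fin n) ℝ)
    (hW : ∀ i j, 0 ≤ W i j) :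
    forestMatrixTot W =
      ∑ k ∈ Finset.range (maxForestCard W + 1),
        (∑ j ∈ Finset.range (maxForestCard W - k + 1), sigmaW W j) •
          (-(lap W)) ^ k ∧
    forestMatrixTot W = (1 + lap W).adjugate := by
  exact ⟨forestMatrixTot_eq_sum_smul_pow hW,
    (adjugate_one_add_lap_of_det hW (det_one_add_lap hW)).symm⟩

/-- `Q = Σ_{k=0}^{n-d} s_{n-d-k} (−L)^k = adj(I + L)`, where `s_i = Σ_{j=0}^i σ_j`. -/
theorem forestMatrixTot_eq_poly_lap {n : ℕ} (W : Matrix (Fin n) (Fin n) ℝ)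
    (hn : 1 < n) (hW : ∀ i j, 0 ≤ W i j) (hdiag : ∀ i, W i i = 0) :
    forestMatrixTot W =
      ∑ k ∈ Finset.range (maxForestCard W + 1),
        (∑ j ∈ Finset.range (maxForestCard W - k + 1), sigmaW W j) •
          (-(lap W)) ^ k ∧
    forestMatrixTot W = (1 + lap W).adjugate :=
  forestMatrixTot_eq_poly_lap_general W hW
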